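/- Let ν be a probability measure on ℝ^d whose support is not contained in any hyperplane (nondegenerate). Let 𝒞 be the closed convex hull of the support of ν and J the Cramér transform of ν. Then the interior of 𝒞 is nonempty and int(𝒞) ⊆ {x : J(x) < ∞} ⊆ 𝒞; moreover for every x in int(𝒞) the supremum defining J(x) is attained at some λ(x) ∈ ℝ^d with L(λ(x)) < ∞. -/
import Mathlib

open MeasureTheory ENNReal Filter
open scoped RealInnerProductSpace

/-- The log-Laplace transform of a measure on `ℝ^d`, with values in `EReal`. -/
noncomputable def logLaplace {d : ℕ} (ν : Measure (EuclideanSpace ℝ (Fin d)))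
    (l : EuclideanSpace ℝ (Fin d)) : EReal :=
  ENNReal.log (∫⁻ z, ENNReal.ofReal (Real.exp ⟪l, z⟫) ∂ν)

/-- The Cramér transform of `ν`. -/
noncomputable def cramer {d : ℕ} (ν : Measure (EuclideanSpace ℝ (Fin d)))
    (x : EuclideanSpace ℝ (Fin d)) : EReal :=
  ⨆ l : EuclideanSpace ℝ (Fin d), ((⟪l, x⟫ : ℝ) : EReal) - logLaplace ν l

/-- The topological support of a measure. -/
def msupport {d : ℕ} (ν : Measure (EuclideanSpace ℝ (Fin d))) :
    Set (EuclideanSpace ℝ (Fin d)) := {x | ∀ U ∈ nhds x, ν U ≠ 0}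

section aux
set_option linter.unusedSectionVars false
set_option linter.unusedVariables false
set_option maxHeartbeats 1000000
variable {d : ℕ} (ν : Measure (EuclideanSpace ℝ (Fin d))) [IsProbabilityMeasure ν]

lemma meas_exp (l : EuclideanSpace ℝ (Fin d)) :
    Measurable fun z : EuclideanSpace ℝ (Fin d) => ENNReal.ofReal (Real.exp ⟪l, z⟫) :=
  (ENNReal.continuous_ofReal.comp (Real.continuous_exp.comp
    (continuous_const.inner continuous_id))).measurable

lemma lintegral_exp_pos (l : EuclideanSpace ℝ (Fin d)) :
    0 < ∫⁻ z, ENNReal.ofReal (Real.exp ⟪l, z⟫) ∂ν := by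
  rw [lintegral_pos_iff_support (meas_exp l)]
  have h : (Function.support fun z : EuclideanSpace ℝ (Fin d) =>
      ENNReal.ofReal (Real.exp ⟪l, z⟫)) = Set.univ := by
    ext z
    simp [Function.mem_support, ENNReal.ofReal_eq_zero, not_le, Real.exp_pos]
  rw [h]
  simp

lemma logLaplace_ne_bot (l : EuclideanSpace ℝ (Fin d)) : logLaplace ν l ≠ ⊥ := by
  simp only [logLaplace, ne_eq, ENNReal.log_eq_bot_iff]
  exact (lintegral_exp_pos ν l).ne'

lemma logLaplace_zero : logLaplace ν 0 = 0 := by simp [logLaplace]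

-- we assume here the conclusion of key_bound

lemma measure_compl_msupport : ν (msupport ν)ᶜ = 0 := by
  apply measure_null_of_locally_null
  intro x hx
  simp only [msupport, Set.mem_compl_iff, Set.mem_setOf_eq, not_forall, not_ne_iff] at hx
  obtain ⟨U, hU, hU0⟩ := hx
  exact ⟨U, mem_nhdsWithin_of_mem_nhds hU, hU0⟩

lemma ae_mem_msupport : ∀ᵐ z ∂ν, z ∈ msupport ν :=
  mem_ae_iff.mpr (measure_compl_msupport ν)

lemma msupport_subset {C : Set (EuclideanSpace ℝ (Fin d))} (hC : IsOpen Cᶜ) (h : ν Cᶜ = 0) :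
    msupport ν ⊆ C := fun x hx => by
  by_contra hxC
  exact hx Cᶜ (hC.mem_nhds hxC) h

lemma hull_subset {C : Set (EuclideanSpace ℝ (Fin d))} (hconv : Convex ℝ C) (hcl : IsClosed C)
    (h : ν Cᶜ = 0) : closure (convexHull ℝ (msupport ν)) ⊆ C :=
  closure_minimal (convexHull_min (msupport_subset ν hcl.isOpen_compl h) hconv) hcl

lemma msupport_nonempty : (msupport ν).Nonempty := by
  by_contra h
  rw [Set.not_nonempty_iff_eq_empty] at h
  have h2 := measure_compl_msupport ν
  rw [h, Set.compl_empty] at h2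
  simp [measure_univ] at h2

lemma affineSpan_msupport_top
    (hnondeg : ∀ a : EuclideanSpace ℝ (Fin d), a ≠ 0 → ∀ c : ℝ,
      ν {x | ⟪a, x⟫ = c} ≠ 1) :
    affineSpan ℝ (msupport ν) = ⊤ := by
  obtain ⟨p, hp⟩ := msupport_nonempty ν
  rw [AffineSubspace.affineSpan_eq_top_iff_vectorSpan_eq_top_of_nonempty ℝ _ _ ⟨p, hp⟩]
  by_contra hV
  have hbot : (vectorSpan ℝ (msupport ν))ᗮ ≠ ⊥ :=
    fun h => hV (Submodule.orthogonal_eq_bot_iff.mp h)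
  obtain ⟨a, ha, ha0⟩ := Submodule.exists_mem_ne_zero_of_ne_bot hbot
  have hsub : msupport ν ⊆ {x | ⟪a, x⟫ = ⟪a, p⟫} := by
    intro x hx
    have hmem : x - p ∈ vectorSpan ℝ (msupport ν) := vsub_mem_vectorSpan ℝ hx hp
    have h0 := ha (x - p) hmem
    rw [real_inner_comm, inner_sub_right] at h0
    simp only [Set.mem_setOf_eq]
    linarith
  have hmeas : MeasurableSet {x : EuclideanSpace ℝ (Fin d) | ⟪a, x⟫ = ⟪a, p⟫} :=
    (isClosed_eq (continuous_const.inner continuous_id) continuous_const).measurableSet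
  have h1 : ν {x | ⟪a, x⟫ = ⟪a, p⟫} = 1 := by
    rw [← prob_compl_eq_zero_iff hmeas]
    exact measure_mono_null (Set.compl_subset_compl.mpr hsub) (measure_compl_msupport ν)
  exact hnondeg a ha0 ⟪a, p⟫ h1

lemma cramer_eq_top_of_notMem {x : EuclideanSpace ℝ (Fin d)}
    (hx : x ∉ closure (convexHull ℝ (msupport ν))) : cramer ν x = ⊤ := by
  obtain ⟨f, u, hfa, hfx⟩ := geometric_hahn_banach_closed_point
    ((convex_convexHull ℝ (msupport ν)).closure) isClosed_closure hx
  set a := (InnerProductSpace.toDual ℝ (EuclideanSpace ℝ (Fin d))).symm f with ha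
  have hinner : ∀ y, ⟪a, y⟫ = f y := fun y => InnerProductSpace.toDual_symm_apply
  -- log-Laplace bound along s • a
  have key : ∀ s : ℝ, 0 ≤ s → logLaplace ν (s • a) ≤ ((s * u : ℝ) : EReal) := by
    intro s hs
    have hb : ∫⁻ z, ENNReal.ofReal (Real.exp ⟪s • a, z⟫) ∂ν ≤
        ENNReal.ofReal (Real.exp (s * u)) := by
      have hmono : ∀ᵐ z ∂ν, ENNReal.ofReal (Real.exp ⟪s • a, z⟫) ≤
          ENNReal.ofReal (Real.exp (s * u)) := by
        filter_upwards [ae_mem_msupport ν] with z hz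
        have hzC : z ∈ closure (convexHull ℝ (msupport ν)) :=
          subset_closure (subset_convexHull ℝ _ hz)
        have h1 : ⟪a, z⟫ ≤ u := (hinner z ▸ (hfa z hzC)).le
        have h2 : ⟪s • a, z⟫ ≤ s * u := by
          rw [real_inner_smul_left]
          exact mul_le_mul_of_nonneg_left h1 hs
        exact ENNReal.ofReal_le_ofReal (Real.exp_le_exp.mpr h2)
      calc ∫⁻ z, ENNReal.ofReal (Real.exp ⟪s • a, z⟫) ∂ν
          ≤ ∫⁻ _, ENNReal.ofReal (Real.exp (s * u)) ∂ν := lintegral_mono_ae hmono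
        _ = ENNReal.ofReal (Real.exp (s * u)) := by rw [lintegral_const, measure_univ, mul_one]
    have : ENNReal.log (∫⁻ z, ENNReal.ofReal (Real.exp ⟪s • a, z⟫) ∂ν) ≤
        ENNReal.log (ENNReal.ofReal (Real.exp (s * u))) := ENNReal.log_monotone hb
    rwa [ENNReal.log_ofReal_of_pos (Real.exp_pos _), Real.log_exp] at this
  -- conclude
  have hgap : 0 < ⟪a, x⟫ - u := by have := hinner x ▸ hfx; linarith [hinner x ▸ hfx]
  rw [EReal.eq_top_iff_forall_lt]
  intro r
  set s : ℝ := max 0 ((r + 1) / (⟪a, x⟫ - u)) with hsdef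
  have hs0 : 0 ≤ s := le_max_left _ _
  have hlow : r + 1 ≤ s * (⟪a, x⟫ - u) := by
    have : (r + 1) / (⟪a, x⟫ - u) ≤ s := le_max_right _ _
    calc r + 1 = ((r + 1) / (⟪a, x⟫ - u)) * (⟪a, x⟫ - u) := (div_mul_cancel₀ _ hgap.ne').symm
      _ ≤ s * (⟪a, x⟫ - u) := mul_le_mul_of_nonneg_right this hgap.le
  have hF : ((s * ⟪a, x⟫ - s * u : ℝ) : EReal) ≤ ((⟪s • a, x⟫ : ℝ) : EReal) - logLaplace ν (s • a) := by
    rw [EReal.coe_sub]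
    have h1 : ((s * ⟪a, x⟫ : ℝ) : EReal) = ((⟪s • a, x⟫ : ℝ) : EReal) := by
      rw [real_inner_smul_left]
    rw [h1]
    exact EReal.sub_le_sub le_rfl (key s hs0)
  have hr : (r : EReal) < ((s * ⟪a, x⟫ - s * u : ℝ) : EReal) := by
    rw [EReal.coe_lt_coe_iff]
    nlinarith
  calc (r : EReal) < _ := hr
    _ ≤ _ := hF
    _ ≤ cramer ν x := le_iSup (fun l => ((⟪l, x⟫ : ℝ) : EReal) - logLaplace ν l) (s • a)

lemma key_bound {x : EuclideanSpace ℝ (Fin d)}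
    (hx : x ∈ interior (closure (convexHull ℝ (msupport ν)))) :
    ∃ δ : ℝ, 0 < δ ∧ ∃ c : ℝ, 0 < c ∧ c ≤ 1 ∧
      ∀ l : EuclideanSpace ℝ (Fin d),
        ((⟪l, x⟫ + ‖l‖ * δ + Real.log c : ℝ) : EReal) ≤ logLaplace ν l := by
  classical
  obtain ⟨ε, hε, hball⟩ := Metric.mem_nhds_iff.mp (mem_interior_iff_mem_nhds.mp hx)
  -- every halfspace at distance ε/2 beyond x has positive measure
  have hhalf : ∀ u : EuclideanSpace ℝ (Fin d), ‖u‖ = 1 →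
      ν {z | ⟪u, x⟫ + ε / 2 < ⟪u, z⟫} ≠ 0 := by
    intro u hu h0
    have hlin : IsLinearMap ℝ fun z : EuclideanSpace ℝ (Fin d) => ⟪u, z⟫ :=
      ⟨fun a b => inner_add_right u a b, fun r y => real_inner_smul_right u y r⟩
    have hCc : {z : EuclideanSpace ℝ (Fin d) | ⟪u, z⟫ ≤ ⟪u, x⟫ + ε / 2}ᶜ =
        {z | ⟪u, x⟫ + ε / 2 < ⟪u, z⟫} := by
      ext z; simp [not_le]
    have hsub : closure (convexHull ℝ (msupport ν)) ⊆
        {z | ⟪u, z⟫ ≤ ⟪u, x⟫ + ε / 2} := by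
      apply hull_subset ν (convex_halfSpace_le hlin _)
        (isClosed_le (continuous_const.inner continuous_id) continuous_const)
      rw [hCc]; exact h0
    have hp : x + (3 * ε / 4) • u ∈ Metric.ball x ε := by
      rw [Metric.mem_ball, dist_eq_norm, add_sub_cancel_left, norm_smul, hu, mul_one]
      rw [Real.norm_eq_abs, abs_of_nonneg (by linarith)]
      linarith
    have := hsub (hball hp)
    simp only [Set.mem_setOf_eq, inner_add_right, real_inner_smul_right] at this
    have huu : ⟪u, u⟫ = (1 : ℝ) := by
      rw [real_inner_self_eq_norm_mul_norm, hu]; ring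
    rw [huu] at this
    linarith
  -- positive mass in a bounded piece of each halfspace
  have hR : ∀ u : EuclideanSpace ℝ (Fin d), ∃ n : ℕ, ‖u‖ = 1 →
      0 < ν ({z | ⟪u, x⟫ + ε / 2 < ⟪u, z⟫} ∩ Metric.closedBall x (n + 1)) := by
    intro u
    by_cases hu : ‖u‖ = 1
    · have hS := hhalf u hu
      have hU : {z | ⟪u, x⟫ + ε / 2 < ⟪u, z⟫} =
          ⋃ n : ℕ, ({z | ⟪u, x⟫ + ε / 2 < ⟪u, z⟫} ∩ Metric.closedBall x (n + 1)) := by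
        ext z
        simp only [Set.mem_iUnion, Set.mem_inter_iff, Set.mem_setOf_eq,
          Metric.mem_closedBall]
        constructor
        · intro hz
          refine ⟨⌈dist z x⌉₊, hz, (Nat.le_ceil _).trans ?_⟩
          linarith
        · rintro ⟨n, hn, -⟩
          exact hn
      have hmono : Monotone fun n : ℕ =>
          ({z | ⟪u, x⟫ + ε / 2 < ⟪u, z⟫} ∩ Metric.closedBall x (n + 1)) := by
        intro m n hmn
        refine Set.inter_subset_inter_right _ (Metric.closedBall_subset_closedBall ?_)
        have : (m : ℝ) ≤ n := Nat.cast_le.mpr hmn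
        linarith
      have := hmono.directed_le.measure_iUnion (μ := ν)
      rw [hU, this] at hS
      have hpos : 0 < ⨆ n : ℕ, ν ({z | ⟪u, x⟫ + ε / 2 < ⟪u, z⟫} ∩
          Metric.closedBall x (n + 1)) := pos_iff_ne_zero.mpr hS
      obtain ⟨n, hn⟩ := lt_iSup_iff.mp hpos
      exact ⟨n, fun _ => hn⟩
    · exact ⟨0, fun h => absurd h hu⟩
  choose R hRpos using hR
  by_cases hsph : ∃ u : EuclideanSpace ℝ (Fin d), ‖u‖ = 1
  swap
  · -- trivial case: only l = 0
    refine ⟨1, one_pos, 1, one_pos, le_refl 1, fun l => ?_⟩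
    have hl : l = 0 := by
      by_contra hl
      exact hsph ⟨‖l‖⁻¹ • l, by
        rw [norm_smul, norm_inv, norm_norm, inv_mul_cancel₀ (norm_ne_zero_iff.mpr hl)]⟩
    subst hl
    simp [logLaplace_zero ν]
  -- compactness: finite cover of the sphere
  obtain ⟨u0, hu0⟩ := hsph
  have hcov : ∀ u ∈ Metric.sphere (0 : EuclideanSpace ℝ (Fin d)) 1,
      Metric.ball u (ε / (4 * (R u + 1))) ∈ nhds u := fun u _ =>
    Metric.ball_mem_nhds u (by positivity)
  obtain ⟨t, h1t, h2t⟩ := (isCompact_sphere (0 : EuclideanSpace ℝ (Fin d)) 1).elim_nhds_subcover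
    (fun u => Metric.ball u (ε / (4 * (R u + 1)))) hcov
  have htne : t.Nonempty := by
    have := h2t (mem_sphere_zero_iff_norm.mpr hu0)
    obtain ⟨i, hit, -⟩ := Set.mem_iUnion₂.mp this
    exact ⟨i, hit⟩
  set c : ℝ := t.inf' htne (fun u =>
    (ν ({z | ⟪u, x⟫ + ε / 2 < ⟪u, z⟫} ∩ Metric.closedBall x (R u + 1))).toReal) with hc
  have hcpos : 0 < c := by
    rw [hc, Finset.lt_inf'_iff]
    intro u hut
    exact ENNReal.toReal_pos (hRpos u (mem_sphere_zero_iff_norm.mp (h1t u hut))).ne'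
      (measure_ne_top ν _)
  have hc1 : c ≤ 1 := by
    obtain ⟨i, hit⟩ := htne
    refine (Finset.inf'_le _ hit).trans ?_
    have := ENNReal.toReal_mono ENNReal.one_ne_top (prob_le_one (μ := ν)
      (s := {z | ⟪i, x⟫ + ε / 2 < ⟪i, z⟫} ∩ Metric.closedBall x (R i + 1)))
    simpa using this
  refine ⟨ε / 4, by positivity, c, hcpos, hc1, fun l => ?_⟩
  rcases eq_or_ne l 0 with rfl | hl
  · have : Real.log c ≤ 0 := Real.log_nonpos hcpos.le hc1
    simp only [inner_zero_left, norm_zero, zero_mul, add_zero, zero_add, logLaplace_zero ν]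
    exact_mod_cast this
  -- main case
  set u : EuclideanSpace ℝ (Fin d) := ‖l‖⁻¹ • l with hudef
  have hlnorm : (0:ℝ) < ‖l‖ := norm_pos_iff.mpr hl
  have hu : ‖u‖ = 1 := by
    rw [hudef, norm_smul, norm_inv, norm_norm, inv_mul_cancel₀ hlnorm.ne']
  obtain ⟨i, hit, hui⟩ := Set.mem_iUnion₂.mp (h2t (mem_sphere_zero_iff_norm.mpr hu))
  set A := {z | ⟪i, x⟫ + ε / 2 < ⟪i, z⟫} ∩ Metric.closedBall x (R i + 1) with hA
  have hAmeas : MeasurableSet A :=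
    ((isOpen_lt continuous_const (continuous_const.inner continuous_id)).measurableSet).inter
      measurableSet_closedBall
  have hclaim : ∀ z ∈ A, ⟪l, x⟫ + ‖l‖ * (ε / 4) ≤ ⟪l, z⟫ := by
    rintro z ⟨h1z, h2z⟩
    rw [Metric.mem_closedBall] at h2z
    have hnzx : ‖z - x‖ ≤ R i + 1 := by rwa [← dist_eq_norm]
    have hnui : ‖u - i‖ ≤ ε / (4 * (R i + 1)) := by
      rw [Metric.mem_ball, dist_eq_norm] at hui
      exact hui.le
    have hiz : ε / 2 < ⟪i, z - x⟫ := by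
      rw [inner_sub_right]; simp only [Set.mem_setOf_eq] at h1z; linarith
    have hcross : |⟪u - i, z - x⟫| ≤ ε / 4 := by
      calc |⟪u - i, z - x⟫| ≤ ‖u - i‖ * ‖z - x‖ := abs_real_inner_le_norm _ _
        _ ≤ (ε / (4 * (R i + 1))) * (R i + 1) := by
            apply mul_le_mul hnui hnzx (norm_nonneg _) (by positivity)
        _ = ε / 4 := by field_simp
    have huz : ε / 4 ≤ ⟪u, z - x⟫ := by
      have : ⟪u, z - x⟫ = ⟪i, z - x⟫ + ⟪u - i, z - x⟫ := by
        rw [inner_sub_left]; ring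
      rw [this]
      have := abs_le.mp hcross
      linarith
    have hlz : ⟪l, z - x⟫ = ‖l‖ * ⟪u, z - x⟫ := by
      rw [hudef, real_inner_smul_left]
      field_simp
    have : ‖l‖ * (ε / 4) ≤ ⟪l, z - x⟫ := by
      rw [hlz]
      exact mul_le_mul_of_nonneg_left huz (norm_nonneg _)
    rw [inner_sub_right] at this
    linarith
  -- integral lower bound
  have hint : ENNReal.ofReal (Real.exp (⟪l, x⟫ + ‖l‖ * (ε / 4))) * ENNReal.ofReal c ≤
      ∫⁻ z, ENNReal.ofReal (Real.exp ⟪l, z⟫) ∂ν := by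
    have hνA : ENNReal.ofReal c ≤ ν A := by
      apply ENNReal.ofReal_le_of_le_toReal
      exact Finset.inf'_le _ hit
    calc ENNReal.ofReal (Real.exp (⟪l, x⟫ + ‖l‖ * (ε / 4))) * ENNReal.ofReal c
        ≤ ENNReal.ofReal (Real.exp (⟪l, x⟫ + ‖l‖ * (ε / 4))) * ν A :=
          mul_le_mul_right hνA _
      _ = ∫⁻ _ in A, ENNReal.ofReal (Real.exp (⟪l, x⟫ + ‖l‖ * (ε / 4))) ∂ν := by
          rw [setLIntegral_const]
      _ ≤ ∫⁻ z in A, ENNReal.ofReal (Real.exp ⟪l, z⟫) ∂ν := by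
          apply setLIntegral_mono (meas_exp l)
          intro z hz
          exact ENNReal.ofReal_le_ofReal (Real.exp_le_exp.mpr (hclaim z hz))
      _ ≤ ∫⁻ z, ENNReal.ofReal (Real.exp ⟪l, z⟫) ∂ν := setLIntegral_le_lintegral _ _
  have hlog := ENNReal.log_monotone hint
  rw [ENNReal.log_mul_add, ENNReal.log_ofReal_of_pos (Real.exp_pos _),
    ENNReal.log_ofReal_of_pos hcpos, Real.log_exp] at hlog
  refine le_trans (le_of_eq ?_) hlog
  rw [← EReal.coe_add]

lemma cramer_facts {x : EuclideanSpace ℝ (Fin d)} {δ c : ℝ} (hδ : 0 < δ) (hcpos : 0 < c)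
    (hc1 : c ≤ 1)
    (hkey : ∀ l : EuclideanSpace ℝ (Fin d),
      ((⟪l, x⟫ + ‖l‖ * δ + Real.log c : ℝ) : EReal) ≤ logLaplace ν l) :
    cramer ν x < ⊤ ∧ ∃ l : EuclideanSpace ℝ (Fin d),
      cramer ν x = ((⟪l, x⟫ : ℝ) : EReal) - logLaplace ν l ∧ logLaplace ν l ≠ ⊤ := by
  have hFb : ∀ l : EuclideanSpace ℝ (Fin d),
      ((⟪l, x⟫ : ℝ) : EReal) - logLaplace ν l ≤ ((-(‖l‖ * δ) - Real.log c : ℝ) : EReal) := by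
    intro l
    calc ((⟪l, x⟫ : ℝ) : EReal) - logLaplace ν l
        ≤ ((⟪l, x⟫ : ℝ) : EReal) - ((⟪l, x⟫ + ‖l‖ * δ + Real.log c : ℝ) : EReal) :=
          EReal.sub_le_sub le_rfl (hkey l)
      _ = ((⟪l, x⟫ - (⟪l, x⟫ + ‖l‖ * δ + Real.log c) : ℝ) : EReal) := by
          rw [EReal.coe_sub]
      _ = ((-(‖l‖ * δ) - Real.log c : ℝ) : EReal) := by
          rw [EReal.coe_eq_coe_iff]; ring
  have h0 : (0 : EReal) ≤ cramer ν x := by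
    have h00 : ((⟪(0 : EuclideanSpace ℝ (Fin d)), x⟫ : ℝ) : EReal) - logLaplace ν 0 = 0 := by
      rw [logLaplace_zero ν]; simp
    calc (0 : EReal) = _ := h00.symm
      _ ≤ cramer ν x := le_iSup (fun l => ((⟪l, x⟫ : ℝ) : EReal) - logLaplace ν l) 0
  have htop : cramer ν x ≤ ((-Real.log c : ℝ) : EReal) := by
    refine iSup_le fun l => (hFb l).trans ?_
    rw [EReal.coe_le_coe_iff]
    nlinarith [norm_nonneg l]
  have hne_top : cramer ν x ≠ ⊤ := (lt_of_le_of_lt htop (EReal.coe_lt_top _)).ne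
  have hne_bot : cramer ν x ≠ ⊥ := by
    intro h; rw [h] at h0; exact (EReal.bot_lt_zero).not_ge h0
  refine ⟨lt_of_le_of_lt htop (EReal.coe_lt_top _), ?_⟩
  set Mr := (cramer ν x).toReal with hMr
  have hM : cramer ν x = (Mr : EReal) := (EReal.coe_toReal hne_top hne_bot).symm
  -- maximizing sequence
  have hseq : ∀ n : ℕ, ∃ l : EuclideanSpace ℝ (Fin d),
      ((Mr - 1 / (n + 1) : ℝ) : EReal) < ((⟪l, x⟫ : ℝ) : EReal) - logLaplace ν l := by
    intro n
    have hlt : ((Mr - 1 / (n + 1) : ℝ) : EReal) < cramer ν x := by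
      rw [hM, EReal.coe_lt_coe_iff]
      have : (0 : ℝ) < 1 / (n + 1) := by positivity
      linarith
    rw [cramer] at hlt
    exact lt_iSup_iff.mp hlt
  choose ls hls using hseq
  have hinv1 : ∀ n : ℕ, (0 : ℝ) < 1 / (n + 1) ∧ 1 / ((n : ℝ) + 1) ≤ 1 := by
    intro n
    constructor
    · positivity
    · rw [div_le_one (by positivity)]
      linarith [Nat.cast_nonneg (α := ℝ) n]
  have hRb : ∀ n, ls n ∈ Metric.closedBall (0 : EuclideanSpace ℝ (Fin d))
      ((-Real.log c - Mr + 1) / δ) := by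
    intro n
    have h1 := (hls n).trans_le (hFb (ls n))
    rw [EReal.coe_lt_coe_iff] at h1
    rw [Metric.mem_closedBall, dist_zero_right, le_div_iff₀ hδ]
    obtain ⟨ha, hb⟩ := hinv1 n
    linarith
  obtain ⟨lstar, -, φ, hφmono, hφlim⟩ :=
    (isCompact_closedBall (0 : EuclideanSpace ℝ (Fin d)) _).tendsto_subseq hRb
  -- quantitative bound on each integral
  have hLn : ∀ n : ℕ, ∫⁻ z, ENNReal.ofReal (Real.exp ⟪ls n, z⟫) ∂ν ≤
      ENNReal.ofReal (Real.exp (⟪ls n, x⟫ - Mr + 1 / (n + 1))) := by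
    intro n
    have h1 := hls n
    have hLt : logLaplace ν (ls n) ≠ ⊤ := by
      intro h
      rw [h, EReal.sub_top] at h1
      exact (not_lt_bot h1)
    set Lr := (logLaplace ν (ls n)).toReal with hLrdef
    have hLr : logLaplace ν (ls n) = (Lr : EReal) :=
      (EReal.coe_toReal hLt (logLaplace_ne_bot ν (ls n))).symm
    rw [hLr, ← EReal.coe_sub, EReal.coe_lt_coe_iff] at h1
    have h3 : logLaplace ν (ls n) ≤ ((⟪ls n, x⟫ - Mr + 1 / (n + 1) : ℝ) : EReal) := by
      rw [hLr, EReal.coe_le_coe_iff]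
      linarith
    have h4 : logLaplace ν (ls n) ≤
        ENNReal.log (ENNReal.ofReal (Real.exp (⟪ls n, x⟫ - Mr + 1 / (n + 1)))) := by
      rwa [ENNReal.log_ofReal_of_pos (Real.exp_pos _), Real.log_exp]
    exact ENNReal.log_le_log_iff.mp h4
  -- Fatou
  have hpt : ∀ z : EuclideanSpace ℝ (Fin d),
      Tendsto (fun n => ENNReal.ofReal (Real.exp ⟪ls (φ n), z⟫)) atTop
        (nhds (ENNReal.ofReal (Real.exp ⟪lstar, z⟫))) := by
    intro z
    have hcont : Continuous fun w : EuclideanSpace ℝ (Fin d) =>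
        ENNReal.ofReal (Real.exp ⟪w, z⟫) :=
      ENNReal.continuous_ofReal.comp (Real.continuous_exp.comp
        (continuous_id.inner continuous_const))
    exact (hcont.tendsto lstar).comp hφlim
  have hFatou : ∫⁻ z, ENNReal.ofReal (Real.exp ⟪lstar, z⟫) ∂ν ≤
      liminf (fun n => ∫⁻ z, ENNReal.ofReal (Real.exp ⟪ls (φ n), z⟫) ∂ν) atTop := by
    have heq : ∫⁻ z, ENNReal.ofReal (Real.exp ⟪lstar, z⟫) ∂ν =
        ∫⁻ z, liminf (fun n => ENNReal.ofReal (Real.exp ⟪ls (φ n), z⟫)) atTop ∂ν :=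
      lintegral_congr fun z => ((hpt z).liminf_eq).symm
    rw [heq]
    exact lintegral_liminf_le fun n => meas_exp _
  have hlim2 : Tendsto (fun n => ENNReal.ofReal
      (Real.exp (⟪ls (φ n), x⟫ - Mr + 1 / (φ n + 1)))) atTop
      (nhds (ENNReal.ofReal (Real.exp (⟪lstar, x⟫ - Mr)))) := by
    have h1 : Tendsto (fun n => ⟪ls (φ n), x⟫) atTop (nhds ⟪lstar, x⟫) :=
      ((continuous_id.inner continuous_const).tendsto lstar).comp hφlim
    have h2 : Tendsto (fun n : ℕ => 1 / ((φ n : ℝ) + 1)) atTop (nhds 0) :=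
      tendsto_one_div_add_atTop_nhds_zero_nat.comp hφmono.tendsto_atTop
    have h3 : Tendsto (fun n => ⟪ls (φ n), x⟫ - Mr + 1 / (φ n + 1)) atTop
        (nhds (⟪lstar, x⟫ - Mr)) := by
      have h4 := (h1.sub (tendsto_const_nhds (x := Mr))).add h2
      simpa using h4
    exact (ENNReal.continuous_ofReal.tendsto _).comp
      ((Real.continuous_exp.tendsto _).comp h3)
  have hchain : ∫⁻ z, ENNReal.ofReal (Real.exp ⟪lstar, z⟫) ∂ν ≤
      ENNReal.ofReal (Real.exp (⟪lstar, x⟫ - Mr)) := by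
    refine hFatou.trans ?_
    calc liminf (fun n => ∫⁻ z, ENNReal.ofReal (Real.exp ⟪ls (φ n), z⟫) ∂ν) atTop
        ≤ liminf (fun n => ENNReal.ofReal
            (Real.exp (⟪ls (φ n), x⟫ - Mr + 1 / (φ n + 1)))) atTop :=
          liminf_le_liminf (Eventually.of_forall fun n => hLn (φ n))
      _ = ENNReal.ofReal (Real.exp (⟪lstar, x⟫ - Mr)) := hlim2.liminf_eq
  have hLstar_le : logLaplace ν lstar ≤ ((⟪lstar, x⟫ - Mr : ℝ) : EReal) := by
    have h5 := ENNReal.log_monotone hchain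
    rwa [ENNReal.log_ofReal_of_pos (Real.exp_pos _), Real.log_exp] at h5
  have hLstar_ne_top : logLaplace ν lstar ≠ ⊤ := by
    intro h
    rw [h] at hLstar_le
    exact (EReal.coe_lt_top _).not_ge hLstar_le
  refine ⟨lstar, le_antisymm ?_ (hM ▸ ?_), hLstar_ne_top⟩
  · set Lr := (logLaplace ν lstar).toReal with hLrdef
    have hLr : logLaplace ν lstar = (Lr : EReal) :=
      (EReal.coe_toReal hLstar_ne_top (logLaplace_ne_bot ν lstar)).symm
    rw [hM, hLr, ← EReal.coe_sub, EReal.coe_le_coe_iff]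
    rw [hLr, EReal.coe_le_coe_iff] at hLstar_le
    linarith
  · rw [← hM]
    exact le_iSup (fun l => ((⟪l, x⟫ : ℝ) : EReal) - logLaplace ν l) lstar

end aux

theorem cramer_domain_convex_hull {d : ℕ}
    (ν : Measure (EuclideanSpace ℝ (Fin d))) [IsProbabilityMeasure ν]
    (hnondeg : ∀ a : EuclideanSpace ℝ (Fin d), a ≠ 0 → ∀ c : ℝ,
      ν {x | ⟪a, x⟫ = c} ≠ 1) :
    (interior (closure (convexHull ℝ (msupport ν)))).Nonempty ∧
    interior (closure (convexHull ℝ (msupport ν))) ⊆ {x | cramer ν x < ⊤} ∧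
    {x | cramer ν x < ⊤} ⊆ closure (convexHull ℝ (msupport ν)) ∧
    (∀ x ∈ interior (closure (convexHull ℝ (msupport ν))),
      ∃ l : EuclideanSpace ℝ (Fin d),
        cramer ν x = ((⟪l, x⟫ : ℝ) : EReal) - logLaplace ν l ∧ logLaplace ν l ≠ ⊤) := by
  have hspan := affineSpan_msupport_top ν hnondeg
  have hne : (interior (closure (convexHull ℝ (msupport ν)))).Nonempty := by
    have h1 : (interior (convexHull ℝ (msupport ν))).Nonempty :=
      interior_convexHull_nonempty_iff_affineSpan_eq_top.mpr hspan
    exact h1.mono (interior_mono subset_closure)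
  refine ⟨hne, ?_, ?_, ?_⟩
  · intro x hx
    obtain ⟨δ, hδ, c, hcpos, hc1, hkey⟩ := key_bound ν hx
    exact (cramer_facts ν hδ hcpos hc1 hkey).1
  · intro x hx
    by_contra hxC
    rw [Set.mem_setOf_eq, cramer_eq_top_of_notMem ν hxC] at hx
    exact lt_irrefl _ hx
  · intro x hx
    obtain ⟨δ, hδ, c, hcpos, hc1, hkey⟩ := key_bound ν hx
    exact (cramer_facts ν hδ hcpos hc1 hkey).2
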